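/- arXiv:2510.25529 — 2 statements merged into one kernel-verified Lean document; each statement's English description precedes it below -/
import Mathlib

section
/- For any two stochastic policies π and π' on a finite MDP sharing the same initial state distribution μ, with discount factor 0 < γ < 1, the total variation distance between their discounted state-occupancy measures satisfies TV(d_μ^π, d_μ^{π'}) ≤ (γ/(1-γ)) · sup_{s∈S} TV(π(·|s), π'(·|s)). -/
open scoped BigOperators

noncomputable section

/-- Total variation distance between two functions (mass functions) on a finite set. -/
def tv {X : Type*} [Fintype X] (p q : X → ℝ) : ℝ := (1 / 2) * ∑ x, |p x - q x|

/-- `p` is a probability mass function. -/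
def isProb {X : Type*} [Fintype X] (p : X → ℝ) : Prop := (∀ x, 0 ≤ p x) ∧ ∑ x, p x = 1

/-- One step of the state-distribution dynamics under policy `π` and kernel `P`. -/
def stepKernel {S A : Type*} [Fintype S] [Fintype A]
    (P : S → A → S → ℝ) (π : S → A → ℝ) (ν : S → ℝ) : S → ℝ :=
  fun s' => ∑ s, ν s * ∑ a, π s a * P s a s'

/-- Discounted state occupancy measure `d_μ^π(s) = (1-γ) ∑_t γ^t P(s_t = s)`. -/
def occ {S A : Type*} [Fintype S] [Fintype A]
    (γ : ℝ) (P : S → A → S → ℝ) (π : S → A → ℝ) (μ : S → ℝ) : S → ℝ :=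
  fun s => (1 - γ) * ∑' t : ℕ, γ ^ t * ((stepKernel P π)^[t] μ) s

lemma tv_nonneg {X : Type*} [Fintype X] (p q : X → ℝ) : 0 ≤ tv p q := by
  unfold tv
  positivity

lemma prob_le_one {X : Type*} [Fintype X] {p : X → ℝ} (hp : isProb p) (x : X) : p x ≤ 1 := by
  rw [← hp.2]
  exact Finset.single_le_sum (fun i _ => hp.1 i) (Finset.mem_univ x)

lemma isProb_stepKernel {S A : Type*} [Fintype S] [Fintype A]
    (P : S → A → S → ℝ) (hP : ∀ s a, isProb (P s a))
    (π : S → A → ℝ) (hπ : ∀ s, isProb (π s))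
    (ν : S → ℝ) (hν : isProb ν) : isProb (stepKernel P π ν) := by
  constructor
  · intro s'
    apply Finset.sum_nonneg
    intro s _
    exact mul_nonneg (hν.1 s) (Finset.sum_nonneg fun a _ =>
      mul_nonneg ((hπ s).1 a) ((hP s a).1 s'))
  · have key : ∀ s : S, ∑ s', ν s * ∑ a, π s a * P s a s' = ν s := by
      intro s
      rw [← Finset.mul_sum, Finset.sum_comm]
      simp_rw [← Finset.mul_sum]
      have h1 : ∀ a, ∑ s', P s a s' = 1 := fun a => (hP s a).2
      simp_rw [h1, mul_one, (hπ s).2, mul_one]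
    unfold stepKernel
    rw [Finset.sum_comm]
    simp_rw [key]
    exact hν.2

lemma step_bound {S A : Type*} [Fintype S] [Fintype A]
    (P : S → A → S → ℝ) (hP : ∀ s a, isProb (P s a))
    (π π' : S → A → ℝ) (hπ : ∀ s, isProb (π s)) (hπ' : ∀ s, isProb (π' s))
    (ν ν' : S → ℝ) (hν' : isProb ν')
    (ε : ℝ) (hε : ∀ s, tv (π s) (π' s) ≤ ε) :
    tv (stepKernel P π ν) (stepKernel P π' ν') ≤ tv ν ν' + ε := by
  set A1 : S → S → ℝ := fun s s' => ∑ a, π s a * P s a s' with hA1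
  set B : S → S → ℝ := fun s s' => ∑ a, (π s a - π' s a) * P s a s' with hB
  have hA1nn : ∀ s s', 0 ≤ A1 s s' := fun s s' =>
    Finset.sum_nonneg fun a _ => mul_nonneg ((hπ s).1 a) ((hP s a).1 s')
  have hA1sum : ∀ s, ∑ s', A1 s s' = 1 := by
    intro s
    rw [hA1]
    rw [Finset.sum_comm]
    simp_rw [← Finset.mul_sum]
    have h1 : ∀ a, ∑ s', P s a s' = 1 := fun a => (hP s a).2
    simp_rw [h1, mul_one, (hπ s).2]
  have hBsum : ∀ s, ∑ s', |B s s'| ≤ 2 * ε := by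
    intro s
    have hstep : ∀ s', |B s s'| ≤ ∑ a, |π s a - π' s a| * P s a s' := by
      intro s'
      calc |B s s'| ≤ ∑ a, |(π s a - π' s a) * P s a s'| := Finset.abs_sum_le_sum_abs _ _
        _ = ∑ a, |π s a - π' s a| * P s a s' := by
            apply Finset.sum_congr rfl
            intro a _
            rw [abs_mul, abs_of_nonneg ((hP s a).1 s')]
    calc ∑ s', |B s s'| ≤ ∑ s', ∑ a, |π s a - π' s a| * P s a s' :=
          Finset.sum_le_sum fun s' _ => hstep s'
      _ = ∑ a, |π s a - π' s a| := by
          rw [Finset.sum_comm]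
          simp_rw [← Finset.mul_sum]
          have h1 : ∀ a, ∑ s', P s a s' = 1 := fun a => (hP s a).2
          simp_rw [h1, mul_one]
      _ = 2 * tv (π s) (π' s) := by unfold tv; ring
      _ ≤ 2 * ε := by linarith [hε s]
  have key : ∀ s', |stepKernel P π ν s' - stepKernel P π' ν' s'| ≤
      ∑ s, (|ν s - ν' s| * A1 s s' + ν' s * |B s s'|) := by
    intro s'
    have expand : stepKernel P π ν s' - stepKernel P π' ν' s' =
        ∑ s, ((ν s - ν' s) * A1 s s' + ν' s * B s s') := by
      unfold stepKernel
      rw [← Finset.sum_sub_distrib]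
      apply Finset.sum_congr rfl
      intro s _
      simp only [hA1, hB, sub_mul, Finset.sum_sub_distrib]
      ring
    rw [expand]
    calc |∑ s, ((ν s - ν' s) * A1 s s' + ν' s * B s s')|
        ≤ ∑ s, |(ν s - ν' s) * A1 s s' + ν' s * B s s'| := Finset.abs_sum_le_sum_abs _ _
      _ ≤ ∑ s, (|ν s - ν' s| * A1 s s' + ν' s * |B s s'|) := by
          apply Finset.sum_le_sum
          intro s _
          calc |(ν s - ν' s) * A1 s s' + ν' s * B s s'|
              ≤ |(ν s - ν' s) * A1 s s'| + |ν' s * B s s'| := abs_add_le _ _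
            _ = |ν s - ν' s| * A1 s s' + ν' s * |B s s'| := by
                rw [abs_mul, abs_mul, abs_of_nonneg (hA1nn s s'), abs_of_nonneg (hν'.1 s)]
  have main : ∑ s', |stepKernel P π ν s' - stepKernel P π' ν' s'| ≤
      2 * tv ν ν' + 2 * ε := by
    calc ∑ s', |stepKernel P π ν s' - stepKernel P π' ν' s'|
        ≤ ∑ s', ∑ s, (|ν s - ν' s| * A1 s s' + ν' s * |B s s'|) :=
          Finset.sum_le_sum fun s' _ => key s'
      _ = ∑ s, (|ν s - ν' s| * ∑ s', A1 s s') + ∑ s, ν' s * ∑ s', |B s s'| := by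
          rw [Finset.sum_comm]
          simp_rw [Finset.sum_add_distrib, ← Finset.mul_sum]
      _ ≤ ∑ s, |ν s - ν' s| + ∑ s, ν' s * (2 * ε) := by
          apply add_le_add
          · apply Finset.sum_le_sum
            intro s _
            rw [hA1sum s, mul_one]
          · exact Finset.sum_le_sum fun s _ =>
              mul_le_mul_of_nonneg_left (hBsum s) (hν'.1 s)
      _ = 2 * tv ν ν' + 2 * ε := by
          rw [← Finset.sum_mul, hν'.2, one_mul]
          unfold tv; ring
  unfold tv at main ⊢
  linarith [main]

/-- Discounted-Occupancy Lipschitz Lemma: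
`TV(d_μ^π, d_μ^{π'}) ≤ (γ/(1-γ)) · sup_s TV(π(·|s), π'(·|s))`. -/
theorem occupancy_lipschitz
    {S A : Type*} [Fintype S] [Fintype A] [Nonempty S]
    (γ : ℝ) (hγ0 : 0 < γ) (hγ1 : γ < 1)
    (P : S → A → S → ℝ) (hP : ∀ s a, isProb (P s a))
    (μ : S → ℝ) (hμ : isProb μ)
    (π π' : S → A → ℝ) (hπ : ∀ s, isProb (π s)) (hπ' : ∀ s, isProb (π' s)) :
    tv (occ γ P π μ) (occ γ P π' μ) ≤ γ / (1 - γ) * ⨆ s, tv (π s) (π' s) := by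
  classical
  have h1γ : (0:ℝ) < 1 - γ := by linarith
  set ε := ⨆ s, tv (π s) (π' s) with hεdef
  have hε : ∀ s, tv (π s) (π' s) ≤ ε :=
    fun s => le_ciSup (f := fun s => tv (π s) (π' s)) (Set.Finite.bddAbove (Set.finite_range _)) s
  have hε0 : 0 ≤ ε := le_trans (tv_nonneg _ _) (hε (Classical.arbitrary S))
  set ν : ℕ → S → ℝ := fun t => (stepKernel P π)^[t] μ with hνdef
  set ν' : ℕ → S → ℝ := fun t => (stepKernel P π')^[t] μ with hν'def
  have hprob : ∀ t, isProb (ν t) := by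
    intro t
    induction t with
    | zero => simpa [hνdef] using hμ
    | succ t ih =>
      have : ν (t + 1) = stepKernel P π (ν t) := Function.iterate_succ_apply' _ _ _
      rw [this]
      exact isProb_stepKernel P hP π hπ _ ih
  have hprob' : ∀ t, isProb (ν' t) := by
    intro t
    induction t with
    | zero => simpa [hν'def] using hμ
    | succ t ih =>
      have : ν' (t + 1) = stepKernel P π' (ν' t) := Function.iterate_succ_apply' _ _ _
      rw [this]
      exact isProb_stepKernel P hP π' hπ' _ ih
  have hTV : ∀ t : ℕ, tv (ν t) (ν' t) ≤ t * ε := by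
    intro t
    induction t with
    | zero =>
      have : ν 0 = ν' 0 := rfl
      rw [this]
      simp [tv]
    | succ t ih =>
      have h1 : ν (t + 1) = stepKernel P π (ν t) := Function.iterate_succ_apply' _ _ _
      have h1' : ν' (t + 1) = stepKernel P π' (ν' t) := Function.iterate_succ_apply' _ _ _
      rw [h1, h1']
      calc tv (stepKernel P π (ν t)) (stepKernel P π' (ν' t))
          ≤ tv (ν t) (ν' t) + ε := step_bound P hP π π' hπ hπ' _ _ (hprob' t) ε hε
        _ ≤ t * ε + ε := by linarith
        _ = ((t + 1 : ℕ) : ℝ) * ε := by push_cast; ring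
  have hgeo : Summable (fun t : ℕ => γ ^ t) := summable_geometric_of_lt_one hγ0.le hγ1
  have hsumν : ∀ s, Summable (fun t => γ ^ t * ν t s) := by
    intro s
    refine Summable.of_nonneg_of_le
      (fun t => mul_nonneg (pow_nonneg hγ0.le t) ((hprob t).1 s)) (fun t => ?_) hgeo
    calc γ ^ t * ν t s ≤ γ ^ t * 1 :=
          mul_le_mul_of_nonneg_left (prob_le_one (hprob t) s) (pow_nonneg hγ0.le t)
      _ = γ ^ t := mul_one _
  have hsumν' : ∀ s, Summable (fun t => γ ^ t * ν' t s) := by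
    intro s
    refine Summable.of_nonneg_of_le
      (fun t => mul_nonneg (pow_nonneg hγ0.le t) ((hprob' t).1 s)) (fun t => ?_) hgeo
    calc γ ^ t * ν' t s ≤ γ ^ t * 1 :=
          mul_le_mul_of_nonneg_left (prob_le_one (hprob' t) s) (pow_nonneg hγ0.le t)
      _ = γ ^ t := mul_one _
  have habs : ∀ s, Summable (fun t => γ ^ t * |ν t s - ν' t s|) := by
    intro s
    refine Summable.of_nonneg_of_le
      (fun t => mul_nonneg (pow_nonneg hγ0.le t) (abs_nonneg _)) (fun t => ?_)
      (hgeo.mul_left 2)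
    have hb : |ν t s - ν' t s| ≤ 2 := by
      have h1 := (hprob t).1 s
      have h2 := (hprob' t).1 s
      have h3 := prob_le_one (hprob t) s
      have h4 := prob_le_one (hprob' t) s
      rw [abs_le]; constructor <;> linarith
    calc γ ^ t * |ν t s - ν' t s| ≤ γ ^ t * 2 :=
          mul_le_mul_of_nonneg_left hb (pow_nonneg hγ0.le t)
      _ = 2 * γ ^ t := by ring
  have hD : ∀ s, occ γ P π μ s - occ γ P π' μ s =
      (1 - γ) * ∑' t, γ ^ t * (ν t s - ν' t s) := by
    intro s
    show (1 - γ) * ∑' t, γ ^ t * ν t s - (1 - γ) * ∑' t, γ ^ t * ν' t s = _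
    rw [← mul_sub, ← Summable.tsum_sub (hsumν s) (hsumν' s)]
    congr 1
    apply tsum_congr
    intro t
    ring
  have hF : ∀ s, |occ γ P π μ s - occ γ P π' μ s| ≤
      (1 - γ) * ∑' t, γ ^ t * |ν t s - ν' t s| := by
    intro s
    rw [hD s, abs_mul, abs_of_nonneg h1γ.le]
    refine mul_le_mul_of_nonneg_left ?_ h1γ.le
    have hs : Summable (fun t => ‖γ ^ t * (ν t s - ν' t s)‖) := by
      refine (habs s).congr fun t => ?_
      rw [Real.norm_eq_abs, abs_mul, abs_of_nonneg (pow_nonneg hγ0.le t)]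
    calc |∑' t, γ ^ t * (ν t s - ν' t s)| ≤ ∑' t, ‖γ ^ t * (ν t s - ν' t s)‖ :=
          norm_tsum_le_tsum_norm hs
      _ = ∑' t, γ ^ t * |ν t s - ν' t s| := by
          apply tsum_congr
          intro t
          rw [Real.norm_eq_abs, abs_mul, abs_of_nonneg (pow_nonneg hγ0.le t)]
  have hswap : ∑ s, ∑' t, γ ^ t * |ν t s - ν' t s| =
      ∑' t, ∑ s, γ ^ t * |ν t s - ν' t s| :=
    (Summable.tsum_finsetSum (fun s _ => habs s)).symm
  have hterm : ∀ t : ℕ, ∑ s, γ ^ t * |ν t s - ν' t s| ≤ γ ^ t * (2 * (t * ε)) := by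
    intro t
    rw [← Finset.mul_sum]
    refine mul_le_mul_of_nonneg_left ?_ (pow_nonneg hγ0.le t)
    have h := hTV t
    unfold tv at h
    linarith
  have hsummand : Summable (fun t : ℕ => γ ^ t * (2 * (t * ε))) := by
    have h := summable_pow_mul_geometric_of_norm_lt_one 1
      (r := γ) (by rwa [Real.norm_eq_abs, abs_of_pos hγ0])
    refine ((h.mul_left (2 * ε)).congr fun t => ?_)
    push_cast
    ring
  have hsumleft : Summable (fun t : ℕ => ∑ s, γ ^ t * |ν t s - ν' t s|) :=
    summable_sum fun s _ => habs s
  have hts : ∑' t, ∑ s, γ ^ t * |ν t s - ν' t s| ≤ ∑' t : ℕ, γ ^ t * (2 * (t * ε)) :=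
    Summable.tsum_le_tsum hterm hsumleft hsummand
  have hval : ∑' t : ℕ, (t : ℝ) * γ ^ t = γ / (1 - γ) ^ 2 :=
    tsum_coe_mul_geometric_of_norm_lt_one (by rwa [Real.norm_eq_abs, abs_of_pos hγ0])
  have hfin : ∑' t : ℕ, γ ^ t * (2 * (t * ε)) = 2 * ε * (γ / (1 - γ) ^ 2) := by
    rw [← hval, ← tsum_mul_left]
    apply tsum_congr
    intro t
    ring
  unfold tv
  calc (1 / 2) * ∑ s, |occ γ P π μ s - occ γ P π' μ s|
      ≤ (1 / 2) * ∑ s, (1 - γ) * ∑' t, γ ^ t * |ν t s - ν' t s| := by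
        refine mul_le_mul_of_nonneg_left (Finset.sum_le_sum fun s _ => hF s) (by norm_num)
    _ = (1 / 2) * (1 - γ) * ∑' t, ∑ s, γ ^ t * |ν t s - ν' t s| := by
        rw [← Finset.mul_sum, hswap]; ring
    _ ≤ (1 / 2) * (1 - γ) * (2 * ε * (γ / (1 - γ) ^ 2)) := by
        rw [← hfin]
        exact mul_le_mul_of_nonneg_left hts (by positivity)
    _ = γ / (1 - γ) * ε := by
        field_simp
end
end

section
/- (λ-mixture estimator bias) Let ρ and ρ' be probability distributions on a finite set X, g: X → ℝ with |g| ≤ M, and q_λ = (1-λ)ρ + λρ' for λ ∈ [0,1]. Define the IS estimate J_IS = E_{x∼q_λ}[(ρ(x)/q_λ(x)) g(x)] = E_{x∼ρ}[g(x)] and the mixture estimate J_mix = E_{x∼q_λ}[g(x)]. Then |J_mix - J_IS| ≤ λ M √(2 KL(ρ' ‖ ρ)). -/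
open scoped BigOperators

noncomputable section

/-- KL divergence between mass functions on a finite set (assuming absolute continuity). -/
def klDiv {X : Type*} [Fintype X] (p q : X → ℝ) : ℝ := ∑ x, p x * Real.log (p x / q x)

/-- Monotonicity helper: if `f` has nonnegative derivative on `[1, ∞)` then `f 1 ≤ f t`. -/
lemma aux_mono {f f' : ℝ → ℝ} (hf : ∀ x, 1 ≤ x → HasDerivAt f (f' x) x)
    (hf' : ∀ x, 1 ≤ x → 0 ≤ f' x) {t : ℝ} (ht : 1 ≤ t) : f 1 ≤ f t := by
  have hmono : MonotoneOn f (Set.Ici (1:ℝ)) := by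
    apply monotoneOn_of_deriv_nonneg (convex_Ici 1)
    · intro x hx
      exact (hf x hx).continuousAt.continuousWithinAt
    · intro x hx
      rw [interior_Ici] at hx
      exact (hf x (le_of_lt hx)).differentiableAt.differentiableWithinAt
    · intro x hx
      rw [interior_Ici] at hx
      rw [(hf x (le_of_lt hx)).deriv]
      exact hf' x (le_of_lt hx)
  exact hmono (by simp) (by simpa using ht) ht

/-- Upper Padé-type bound for log on `[1, ∞)`. -/
lemma log_le_bound {t : ℝ} (ht : 1 ≤ t) :
    Real.log t ≤ (t - 1) * (t + 5) / (2 * (2 * t + 1)) := by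
  have h := aux_mono (f := fun x => (x - 1) * (x + 5) / (2 * (2 * x + 1)) - Real.log x)
    (f' := fun x => (x - 1)^3 / (x * (2 * x + 1)^2)) ?_ ?_ ht
  · simpa using h
  · intro x hx
    have hx0 : (0:ℝ) < x := lt_of_lt_of_le one_pos hx
    have hd : (2 * (2 * x + 1)) ≠ 0 := ne_of_gt (by nlinarith)
    have h1 : HasDerivAt (fun y : ℝ => (y - 1) * (y + 5)) (1 * (x + 5) + (x - 1) * 1) x :=
      ((hasDerivAt_id x).sub_const 1).mul ((hasDerivAt_id x).add_const 5)
    have h2 : HasDerivAt (fun y : ℝ => 2 * (2 * y + 1)) (2 * 2) x := by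
      simpa using (((hasDerivAt_id x).const_mul 2).add_const 1).const_mul 2
    have h3 := (h1.div h2 hd).sub (Real.hasDerivAt_log (ne_of_gt hx0))
    refine h3.congr_deriv ?_
    field_simp
    ring
  · intro x hx
    have hx0 : (0:ℝ) < x := lt_of_lt_of_le one_pos hx
    have h1 : (0:ℝ) ≤ (x - 1)^3 := pow_nonneg (by linarith) 3
    exact div_nonneg h1 (by positivity)

/-- Lower Padé-type bound for log on `[1, ∞)`. -/
lemma bound_le_log {t : ℝ} (ht : 1 ≤ t) :
    (t - 1) * (5 * t + 1) / (2 * t * (t + 2)) ≤ Real.log t := by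
  have h := aux_mono (f := fun x => Real.log x - (x - 1) * (5 * x + 1) / (2 * x * (x + 2)))
    (f' := fun x => (x - 1)^3 / (x^2 * (x + 2)^2)) ?_ ?_ ht
  · simpa using h
  · intro x hx
    have hx0 : (0:ℝ) < x := lt_of_lt_of_le one_pos hx
    have hd : (2 * x * (x + 2)) ≠ 0 := ne_of_gt (by nlinarith)
    have h1 : HasDerivAt (fun y : ℝ => (y - 1) * (5 * y + 1)) (1 * (5 * x + 1) + (x - 1) * 5) x := by
      have := ((hasDerivAt_id x).sub_const 1).mul (((hasDerivAt_id x).const_mul 5).add_const 1)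
      exact this.congr_deriv (by simp)
    have h2 : HasDerivAt (fun y : ℝ => 2 * y * (y + 2)) (2 * (x + 2) + 2 * x * 1) x := by
      have := (((hasDerivAt_id x).const_mul 2)).mul ((hasDerivAt_id x).add_const 2)
      exact this.congr_deriv (by simp)
    have h3 := (Real.hasDerivAt_log (ne_of_gt hx0)).sub (h1.div h2 hd)
    refine h3.congr_deriv ?_
    field_simp
    ring
  · intro x hx
    have hx0 : (0:ℝ) < x := lt_of_lt_of_le one_pos hx
    have h1 : (0:ℝ) ≤ (x - 1)^3 := pow_nonneg (by linarith) 3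
    exact div_nonneg h1 (by positivity)

/-- Pointwise refined Pinsker inequality. -/
lemma pointwise_bound {a b : ℝ} (ha : 0 ≤ a) (hb : 0 ≤ b) (hab : b = 0 → a = 0) :
    3 * (a - b)^2 / (2 * (a + 2 * b)) ≤ a * Real.log (a / b) - a + b := by
  rcases eq_or_lt_of_le hb with hb0 | hb0
  · have ha0 : a = 0 := hab hb0.symm
    simp [ha0, ← hb0]
  rcases eq_or_lt_of_le ha with ha0 | ha0
  · rw [← ha0]
    have hba : (0:ℝ) < 0 + 2 * b := by linarith
    rw [div_le_iff₀ (by positivity)]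
    ring_nf
    nlinarith [sq_nonneg b]
  · -- a > 0, b > 0
    have hc : (0:ℝ) < a + 2 * b := by linarith
    rcases le_total b a with hba | hba
    · -- t = a/b ≥ 1
      have ht : 1 ≤ a / b := (one_le_div hb0).2 hba
      have hlog := bound_le_log ht
      have key : (a - b) * (5 * a + b) / (2 * (a + 2 * b)) ≤ a * Real.log (a / b) := by
        have h2 : a * ((a/b - 1) * (5 * (a/b) + 1) / (2 * (a/b) * (a/b + 2))) ≤
            a * Real.log (a / b) := by
          exact mul_le_mul_of_nonneg_left hlog ha
        refine le_trans (le_of_eq ?_) h2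
        field_simp
      rw [div_le_iff₀ (by positivity)] at key ⊢
      nlinarith [key]
    · -- b ≥ a, use t = b/a ≥ 1
      have ht : 1 ≤ b / a := (one_le_div ha0).2 hba
      have hlog := log_le_bound ht
      have hlogeq : Real.log (a / b) = - Real.log (b / a) := by
        rw [← Real.log_inv]
        congr 1
        field_simp
      have key : - ((b - a) * (b + 5 * a)) / (2 * (2 * b + a)) ≤ a * Real.log (a / b) := by
        rw [neg_div]
        rw [hlogeq, mul_neg, neg_le_neg_iff]
        have h2 : a * Real.log (b / a) ≤
            a * ((b/a - 1) * (b/a + 5) / (2 * (2 * (b/a) + 1))) :=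
          mul_le_mul_of_nonneg_left hlog ha
        refine h2.trans (le_of_eq ?_)
        field_simp
      rw [div_le_iff₀ (by positivity)]
      rw [div_le_iff₀ (by positivity : (0:ℝ) < 2 * (2 * b + a))] at key
      nlinarith [key]

/-- Finite Pinsker inequality for our `klDiv`. -/
lemma pinsker {X : Type*} [Fintype X] (ρ ρ' : X → ℝ) (hρ : isProb ρ) (hρ' : isProb ρ')
    (habs : ∀ x, ρ x = 0 → ρ' x = 0) :
    ∑ x, |ρ' x - ρ x| ≤ Real.sqrt (2 * klDiv ρ' ρ) := by
  classical
  set c : X → ℝ := fun x => ρ' x + 2 * ρ x with hc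
  set s : Finset X := Finset.univ.filter (fun x => 0 < c x) with hs
  have hzero : ∀ x ∉ s, ρ x = 0 ∧ ρ' x = 0 := by
    intro x hx
    simp only [hs, Finset.mem_filter, Finset.mem_univ, true_and, not_lt] at hx
    have h1 : c x = 0 := le_antisymm hx (by have := hρ.1 x; have := hρ'.1 x; simp [hc]; positivity)
    have hρx : ρ x = 0 := by have := hρ.1 x; have := hρ'.1 x; simp [hc] at h1; linarith
    exact ⟨hρx, habs x hρx⟩
  -- pointwise KL bound summed
  have hKL : ∑ x ∈ s, (ρ' x - ρ x)^2 / c x ≤ (2/3) * klDiv ρ' ρ := by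
    have hterm : ∀ x, 3 * (ρ' x - ρ x)^2 / (2 * c x) ≤
        ρ' x * Real.log (ρ' x / ρ x) - ρ' x + ρ x := fun x =>
      pointwise_bound (hρ'.1 x) (hρ.1 x) (habs x)
    have hsum : ∑ x, 3 * (ρ' x - ρ x)^2 / (2 * c x) ≤
        ∑ x, (ρ' x * Real.log (ρ' x / ρ x) - ρ' x + ρ x) :=
      Finset.sum_le_sum fun x _ => hterm x
    have hrhs : ∑ x, (ρ' x * Real.log (ρ' x / ρ x) - ρ' x + ρ x) = klDiv ρ' ρ := by
      simp [Finset.sum_add_distrib, Finset.sum_sub_distrib, hρ.2, hρ'.2, klDiv]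
    have hpt : ∀ x : X, (ρ' x - ρ x)^2 / c x = (2/3) * (3 * (ρ' x - ρ x)^2 / (2 * c x)) := by
      intro x
      rcases eq_or_ne (c x) 0 with h | h
      · simp [h]
      · field_simp
    have hlhs : ∑ x ∈ s, (ρ' x - ρ x)^2 / c x ≤
        (2/3) * ∑ x, 3 * (ρ' x - ρ x)^2 / (2 * c x) := by
      calc ∑ x ∈ s, (ρ' x - ρ x)^2 / c x ≤ ∑ x, (ρ' x - ρ x)^2 / c x := by
            apply Finset.sum_le_sum_of_subset_of_nonneg (Finset.subset_univ s)
            intro x _ _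
            have h1 := hρ.1 x; have h2 := hρ'.1 x
            have h3 : 0 ≤ c x := by simp only [hc]; positivity
            exact div_nonneg (sq_nonneg _) h3
        _ = (2/3) * ∑ x, 3 * (ρ' x - ρ x)^2 / (2 * c x) := by
            rw [Finset.mul_sum]
            exact Finset.sum_congr rfl fun x _ => hpt x
    calc ∑ x ∈ s, (ρ' x - ρ x)^2 / c x
        ≤ (2/3) * ∑ x, 3 * (ρ' x - ρ x)^2 / (2 * c x) := hlhs
      _ ≤ (2/3) * ∑ x, (ρ' x * Real.log (ρ' x / ρ x) - ρ' x + ρ x) := by linarith [hsum]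
      _ = (2/3) * klDiv ρ' ρ := by rw [hrhs]
  -- total variation restricted to s
  have htv : ∑ x, |ρ' x - ρ x| = ∑ x ∈ s, |ρ' x - ρ x| := by
    rw [← Finset.sum_subset (Finset.subset_univ s)]
    intro x _ hx
    obtain ⟨h1, h2⟩ := hzero x hx
    simp [h1, h2]
  have hcsum : ∑ x ∈ s, c x ≤ 3 := by
    have : ∑ x ∈ s, c x ≤ ∑ x, c x := by
      apply Finset.sum_le_sum_of_subset_of_nonneg (Finset.subset_univ s)
      intro x _ _
      have := hρ.1 x; have := hρ'.1 x
      simp only [hc]; positivity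
    have h2 : ∑ x, c x = 3 := by
      simp [hc, Finset.sum_add_distrib, ← Finset.mul_sum, hρ.2, hρ'.2]
      linarith [hρ.2, hρ'.2]
    linarith
  -- Cauchy–Schwarz (Sedrakyan)
  have hCS : (∑ x ∈ s, |ρ' x - ρ x|)^2 ≤ 2 * klDiv ρ' ρ := by
    rcases Finset.eq_empty_or_nonempty s with hse | hsne
    · have hnn : 0 ≤ ∑ x ∈ s, (ρ' x - ρ x)^2 / c x := by
        apply Finset.sum_nonneg
        intro x hx
        simp only [hs, Finset.mem_filter, Finset.mem_univ, true_and] at hx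
        positivity
      simp [hse]
      nlinarith [hKL, hnn]
    · have hpos : 0 < ∑ x ∈ s, c x := by
        apply Finset.sum_pos
        · intro x hx
          simpa only [hs, Finset.mem_filter, Finset.mem_univ, true_and] using hx
        · exact hsne
      have hsed := Finset.sq_sum_div_le_sum_sq_div s (fun x => |ρ' x - ρ x|)
        (g := c) (fun x hx => by
          simpa only [hs, Finset.mem_filter, Finset.mem_univ, true_and] using hx)
      have heq : ∀ x ∈ s, |ρ' x - ρ x|^2 / c x = (ρ' x - ρ x)^2 / c x := by
        intro x _
        rw [sq_abs]
      rw [Finset.sum_congr rfl heq] at hsed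
      rw [div_le_iff₀ hpos] at hsed
      calc (∑ x ∈ s, |ρ' x - ρ x|)^2 ≤ (∑ x ∈ s, (ρ' x - ρ x)^2 / c x) * ∑ x ∈ s, c x := hsed
        _ ≤ ((2/3) * klDiv ρ' ρ) * 3 := by
            apply mul_le_mul hKL hcsum (le_of_lt hpos)
            nlinarith [hKL, Finset.sum_nonneg (fun x hx => by
              simp only [hs, Finset.mem_filter, Finset.mem_univ, true_and] at hx
              positivity : ∀ x ∈ s, (0:ℝ) ≤ (ρ' x - ρ x)^2 / c x)]
        _ = 2 * klDiv ρ' ρ := by ring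
  rw [htv]
  have habs' : 0 ≤ ∑ x ∈ s, |ρ' x - ρ x| := Finset.sum_nonneg fun x _ => abs_nonneg _
  calc ∑ x ∈ s, |ρ' x - ρ x| = Real.sqrt ((∑ x ∈ s, |ρ' x - ρ x|)^2) := by
        rw [Real.sqrt_sq habs']
    _ ≤ Real.sqrt (2 * klDiv ρ' ρ) := Real.sqrt_le_sqrt hCS

/-- λ-mixture estimator bias: with `q_λ = (1-λ)ρ + λρ'`, `J_IS = E_ρ[g]` and
`J_mix = E_{q_λ}[g]`, one has `|J_mix - J_IS| ≤ λ M √(2 KL(ρ' ‖ ρ))`. -/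
theorem lambda_mixture_bias
    {X : Type*} [Fintype X]
    (ρ ρ' : X → ℝ) (hρ : isProb ρ) (hρ' : isProb ρ')
    (habs : ∀ x, ρ x = 0 → ρ' x = 0)
    (g : X → ℝ) (M : ℝ) (hg : ∀ x, |g x| ≤ M)
    (lam : ℝ) (hlam0 : 0 ≤ lam) (hlam1 : lam ≤ 1) :
    |(∑ x, ((1 - lam) * ρ x + lam * ρ' x) * g x) - ∑ x, ρ x * g x|
      ≤ lam * M * Real.sqrt (2 * klDiv ρ' ρ) := by
  classical
  have hne : Nonempty X := by
    by_contra h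
    rw [not_nonempty_iff] at h
    have := hρ.2
    simp [Finset.univ_eq_empty] at this
  obtain ⟨x0⟩ := hne
  have hM : 0 ≤ M := le_trans (abs_nonneg _) (hg x0)
  have hdiff : (∑ x, ((1 - lam) * ρ x + lam * ρ' x) * g x) - ∑ x, ρ x * g x
      = lam * ∑ x, (ρ' x - ρ x) * g x := by
    rw [Finset.mul_sum, ← Finset.sum_sub_distrib]
    apply Finset.sum_congr rfl
    intro x _
    ring
  rw [hdiff, abs_mul, abs_of_nonneg hlam0]
  have h1 : |∑ x, (ρ' x - ρ x) * g x| ≤ M * ∑ x, |ρ' x - ρ x| := by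
    calc |∑ x, (ρ' x - ρ x) * g x| ≤ ∑ x, |(ρ' x - ρ x) * g x| :=
          Finset.abs_sum_le_sum_abs _ _
      _ ≤ ∑ x, |ρ' x - ρ x| * M := by
          apply Finset.sum_le_sum
          intro x _
          rw [abs_mul]
          exact mul_le_mul_of_nonneg_left (hg x) (abs_nonneg _)
      _ = M * ∑ x, |ρ' x - ρ x| := by rw [← Finset.sum_mul]; ring
  have h2 := pinsker ρ ρ' hρ hρ' habs
  calc lam * |∑ x, (ρ' x - ρ x) * g x| ≤ lam * (M * ∑ x, |ρ' x - ρ x|) :=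
        mul_le_mul_of_nonneg_left h1 hlam0
    _ ≤ lam * (M * Real.sqrt (2 * klDiv ρ' ρ)) := by
        apply mul_le_mul_of_nonneg_left _ hlam0
        exact mul_le_mul_of_nonneg_left h2 hM
    _ = lam * M * Real.sqrt (2 * klDiv ρ' ρ) := by ring
end
end
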